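/- Under mandatory reporting and mutual independence assumptions, ATT_{M=1} = E[Y(1)−Y(0) | D=1, M=1] equals (w·θ)/(w·1) where θ=(β_Y, β_Y+E[Y(0,1)], −E[Y(0,1)], 0) and w = (P(S=al), P(S=ma)+β_M, 0, 0), provided P(D=1, M=1)>0. -/

import Mathlib

/-!
On the event `{D = 1, M(1) = 1}` the effect `Y(1) - Y(0)` is `Y(1,1) - M(0) Y(0,1)`, because
`Y(0,0) = 0` a.s. Independence of `(D, M(0), M(1))` from the outcomes factors its integral as
`P(D = 1, M(1) = 1) E[Y(1,1)] - P(D = 1, M(0) = M(1) = 1) E[Y(0,1)]`, and independence of `D` from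
`(M(0), M(1))` cancels `P(D = 1)` in the ratio. What remains is
`E[Y(1,1)] - P(S = al) / P(M(1) = 1) · E[Y(0,1)]`, which is `(w·θ)/(w·1)` because
`P(M(1) = 1) = P(S = al) + P(S = mi) = P(S = al) + P(S = ma) + β_M`.
-/

open MeasureTheory ProbabilityTheory

namespace ProbabilityTheory

variable {Ω α β : Type*} [MeasurableSpace Ω] [MeasurableSpace α] [MeasurableSpace β]
  {μ : Measure Ω}

lemma IndepFun.measureReal_inter_preimage_eq_mul {X : Ω → α} {Z : Ω → β} (h : IndepFun X Z μ)
    {s : Set α} {t : Set β} (hs : MeasurableSet s) (ht : MeasurableSet t) :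
    μ.real (X ⁻¹' s ∩ Z ⁻¹' t) = μ.real (X ⁻¹' s) * μ.real (Z ⁻¹' t) := by
  simp only [measureReal_def, h.measure_inter_preimage_eq_mul s t hs ht, ENNReal.toReal_mul]

lemma IndepFun.setIntegral_preimage_eq_mul {X : Ω → α} {Z : Ω → ℝ} (h : IndepFun X Z μ)
    (hX : Measurable X) (hZ : AEMeasurable Z μ) {s : Set α} (hs : MeasurableSet s) :
    ∫ ω in X ⁻¹' s, Z ω ∂μ = μ.real (X ⁻¹' s) * ∫ ω, Z ω ∂μ :=
  Indep.setIntegral_eq_mul (f := id) hX.comap_le ((IndepFun_iff_Indep X Z μ).1 h) hZ ⟨s, hs, rfl⟩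
    aestronglyMeasurable_id

end ProbabilityTheory

lemma integrable_of_forall_eq_zero_or_eq_one {Ω : Type*} [MeasurableSpace Ω] {μ : Measure Ω}
    [IsFiniteMeasure μ] {f : Ω → ℝ} (hf : Measurable f) (h01 : ∀ ω, f ω = 0 ∨ f ω = 1) :
    Integrable f μ :=
  .of_bound hf.aestronglyMeasurable 1 <| .of_forall fun ω => by rcases h01 ω with h | h <;> simp [h]

lemma measureReal_eq_add_of_forall_eq_zero_or_eq_one {Ω : Type*} [MeasurableSpace Ω]
    {μ : Measure Ω} [IsFiniteMeasure μ] {f : Ω → ℝ} (hf : Measurable f)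
    (h01 : ∀ ω, f ω = 0 ∨ f ω = 1) {t : Set Ω} (ht : MeasurableSet t) :
    μ.real t = μ.real ({ω | f ω = 1} ∩ t) + μ.real ({ω | f ω = 0} ∩ t) := by
  have hdisj : Disjoint ({ω | f ω = 1} ∩ t) ({ω | f ω = 0} ∩ t) :=
    Set.disjoint_left.2 fun ω h1 h0 => one_ne_zero (h1.1.symm.trans h0.1)
  have hcover : {ω | f ω = 1} ∪ {ω | f ω = 0} = Set.univ :=
    Set.eq_univ_of_forall fun ω => (h01 ω).symm
  rw [← measureReal_union hdisj ((hf (measurableSet_singleton 0)).inter ht),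
    ← Set.union_inter_distrib_right, hcover, Set.univ_inter]

lemma eq_one_and_observed_eq_one_iff {d m₀ m₁ : ℝ} :
    d = 1 ∧ d * m₁ + (1 - d) * m₀ = 1 ↔ d = 1 ∧ m₁ = 1 := by
  constructor <;> rintro ⟨rfl, h⟩ <;> simp_all

section PotentialOutcomes

variable {Ω : Type*} [MeasurableSpace Ω] {μ : Measure Ω} {D : Ω → ℝ} {M : Fin 2 → Ω → ℝ}
  {Y : Fin 2 → Fin 2 → Ω → ℝ}

lemma measureReal_treated_inter_eq (hindep : IndepFun D (fun ω => (M 0 ω, M 1 ω)) μ) :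
    μ.real ({ω | D ω = 1 ∧ M 1 ω = 1} ∩ {ω | M 0 ω = 1})
      = μ.real {ω | D ω = 1} * μ.real {ω | M 0 ω = 1 ∧ M 1 ω = 1} := by
  rw [show {ω | D ω = 1 ∧ M 1 ω = 1} ∩ {ω | M 0 ω = 1} = {ω | D ω = 1 ∧ M 0 ω = 1 ∧ M 1 ω = 1}
    from Set.ext fun _ => and_right_comm.trans and_assoc]
  exact hindep.measureReal_inter_preimage_eq_mul (measurableSet_singleton 1)
    ((measurableSet_singleton 1).prod (measurableSet_singleton 1))

lemma measureReal_treated_eq [IsFiniteMeasure μ] (hMm : ∀ d, Measurable (M d))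
    (hMb : ∀ d ω, M d ω = 0 ∨ M d ω = 1) (hindep : IndepFun D (fun ω => (M 0 ω, M 1 ω)) μ) :
    μ.real {ω | D ω = 1 ∧ M 1 ω = 1} = μ.real {ω | D ω = 1}
      * (μ.real {ω | M 0 ω = 1 ∧ M 1 ω = 1} + μ.real {ω | M 0 ω = 0 ∧ M 1 ω = 1}) := by
  have hsplit : μ.real {ω | M 1 ω = 1}
      = μ.real {ω | M 0 ω = 1 ∧ M 1 ω = 1} + μ.real {ω | M 0 ω = 0 ∧ M 1 ω = 1} :=
    measureReal_eq_add_of_forall_eq_zero_or_eq_one (hMm 0) (hMb 0)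
      (hMm 1 (measurableSet_singleton 1))
  rw [← hsplit]
  exact hindep.measureReal_inter_preimage_eq_mul (measurableSet_singleton 1)
    (measurable_snd (measurableSet_singleton 1))

lemma setIntegral_treated_effect_eq [IsFiniteMeasure μ] (hDm : Measurable D)
    (hMm : ∀ d, Measurable (M d)) (hYm : ∀ d m, Measurable (Y d m))
    (hMb : ∀ d ω, M d ω = 0 ∨ M d ω = 1) (hYb : ∀ d m ω, Y d m ω = 0 ∨ Y d m ω = 1)
    (hindep : IndepFun (fun ω => (D ω, M 0 ω, M 1 ω))
      (fun ω => (Y 0 0 ω, Y 0 1 ω, Y 1 0 ω, Y 1 1 ω)) μ)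
    (hY00 : ∀ᵐ ω ∂μ, Y 0 0 ω = 0) :
    ∫ ω in {ω | D ω = 1 ∧ M 1 ω = 1}, (((1 - M 1 ω) * Y 1 0 ω + M 1 ω * Y 1 1 ω)
        - ((1 - M 0 ω) * Y 0 0 ω + M 0 ω * Y 0 1 ω)) ∂μ
      = μ.real {ω | D ω = 1 ∧ M 1 ω = 1} * (∫ ω, Y 1 1 ω ∂μ)
        - μ.real ({ω | D ω = 1 ∧ M 1 ω = 1} ∩ {ω | M 0 ω = 1}) * ∫ ω, Y 0 1 ω ∂μ := by
  set S : Set Ω := {ω | D ω = 1 ∧ M 1 ω = 1}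
  set T : Set Ω := {ω | M 0 ω = 1}
  have hSm : MeasurableSet S :=
    (hDm (measurableSet_singleton 1)).inter (hMm 1 (measurableSet_singleton 1))
  have hTm : MeasurableSet T := hMm 0 (measurableSet_singleton 1)
  have hX : Measurable fun ω => (D ω, M 0 ω, M 1 ω) := by fun_prop
  have hind11 : IndepFun (fun ω => (D ω, M 0 ω, M 1 ω)) (Y 1 1) μ :=
    hindep.comp measurable_id measurable_snd.snd.snd
  have hind01 : IndepFun (fun ω => (D ω, M 0 ω, M 1 ω)) (Y 0 1) μ :=
    hindep.comp measurable_id measurable_snd.fst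
  have hYint d m : Integrable (Y d m) μ :=
    integrable_of_forall_eq_zero_or_eq_one (hYm d m) (hYb d m)
  calc _ = ∫ ω in S, (Y 1 1 ω - T.indicator (Y 0 1) ω) ∂μ := by
        refine setIntegral_congr_ae hSm ?_
        filter_upwards [hY00] with ω hY00 ⟨_, hM1⟩
        rcases hMb 0 ω with hM0 | hM0 <;> simp [T, hM0, hM1, hY00]
    _ = ∫ ω in S, Y 1 1 ω ∂μ - ∫ ω in S ∩ T, Y 0 1 ω ∂μ := by
        rw [integral_sub (hYint 1 1).integrableOn ((hYint 0 1).indicator hTm).integrableOn,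
          setIntegral_indicator hTm]
    _ = _ := congr_arg₂ (· - ·)
        (hind11.setIntegral_preimage_eq_mul hX (hYm 1 1).aemeasurable
          (s := {p | p.1 = 1 ∧ p.2.2 = 1}) (by measurability))
        (hind01.setIntegral_preimage_eq_mul hX (hYm 0 1).aemeasurable
          (s := {p | (p.1 = 1 ∧ p.2.2 = 1) ∧ p.2.1 = 1}) (by measurability))

end PotentialOutcomes

theorem stmt9_general {Ω : Type*} [MeasurableSpace Ω] (μ : Measure Ω) [IsProbabilityMeasure μ]
    (D : Ω → ℝ) (M : Fin 2 → Ω → ℝ) (Y : Fin 2 → Fin 2 → Ω → ℝ)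
    (hDm : Measurable D) (hMm : ∀ d, Measurable (M d)) (hYm : ∀ d m, Measurable (Y d m))
    (hMb : ∀ d ω, M d ω = 0 ∨ M d ω = 1)
    (hYb : ∀ d m ω, Y d m ω = 0 ∨ Y d m ω = 1)
    (hindep1 : IndepFun D (fun ω => (M 0 ω, M 1 ω)) μ)
    (hindep2 : IndepFun (fun ω => (D ω, M 0 ω, M 1 ω))
      (fun ω => (Y 0 0 ω, Y 0 1 ω, Y 1 0 ω, Y 1 1 ω)) μ)
    (hmand : ∀ d : Fin 2, ∀ᵐ ω ∂μ, Y d 0 ω = 0)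
    (hpos : 0 < (μ {ω | D ω = 1 ∧ D ω * M 1 ω + (1 - D ω) * M 0 ω = 1}).toReal) :
    (∫ ω in {ω | D ω = 1 ∧ D ω * M 1 ω + (1 - D ω) * M 0 ω = 1},
        (((1 - M 1 ω) * Y 1 0 ω + M 1 ω * Y 1 1 ω)
          - ((1 - M 0 ω) * Y 0 0 ω + M 0 ω * Y 0 1 ω)) ∂μ)
      / (μ {ω | D ω = 1 ∧ D ω * M 1 ω + (1 - D ω) * M 0 ω = 1}).toReal
    = ((μ {ω | M 0 ω = 1 ∧ M 1 ω = 1}).toReal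
          * ((∫ ω, Y 1 1 ω ∂μ) - (∫ ω, Y 0 1 ω ∂μ))
        + ((μ {ω | M 0 ω = 1 ∧ M 1 ω = 0}).toReal
            + ((μ {ω | M 0 ω = 0 ∧ M 1 ω = 1}).toReal
              - (μ {ω | M 0 ω = 1 ∧ M 1 ω = 0}).toReal))
          * (((∫ ω, Y 1 1 ω ∂μ) - (∫ ω, Y 0 1 ω ∂μ)) + (∫ ω, Y 0 1 ω ∂μ)))
      / ((μ {ω | M 0 ω = 1 ∧ M 1 ω = 1}).toReal
        + ((μ {ω | M 0 ω = 1 ∧ M 1 ω = 0}).toReal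
            + ((μ {ω | M 0 ω = 0 ∧ M 1 ω = 1}).toReal
              - (μ {ω | M 0 ω = 1 ∧ M 1 ω = 0}).toReal))) := by
  have hS : {ω | D ω = 1 ∧ D ω * M 1 ω + (1 - D ω) * M 0 ω = 1} = {ω | D ω = 1 ∧ M 1 ω = 1} :=
    Set.ext fun _ => eq_one_and_observed_eq_one_iff
  simp only [← measureReal_def] at hpos ⊢
  rw [hS, measureReal_treated_eq hMm hMb hindep1] at hpos
  rw [hS, setIntegral_treated_effect_eq hDm hMm hYm hMb hYb hindep2 (hmand 0),
    measureReal_treated_inter_eq hindep1, measureReal_treated_eq hMm hMb hindep1, add_sub_cancel]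
  have hD := left_ne_zero_of_mul hpos.ne'
  have hM1 := right_ne_zero_of_mul hpos.ne'
  field_simp
  ring

/-- Under mandatory reporting and mutual independence, provided
P(D=1, M=1) > 0 (with M = D·M(1)+(1−D)·M(0)),
ATT_{M=1} = E[Y(1)−Y(0) | D=1, M=1] = (w·θ)/(w·1) where
θ = (β_Y, β_Y + E[Y(0,1)], −E[Y(0,1)], 0) and w = (P(S=al), P(S=ma)+β_M, 0, 0),
with β_M = P(S=mi) − P(S=ma) and β_Y = E[Y(1,1)]−E[Y(0,1)]. -/
theorem stmt9 {Ω : Type*} [MeasurableSpace Ω] (μ : Measure Ω) [IsProbabilityMeasure μ]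
    (D : Ω → ℝ) (M : Fin 2 → Ω → ℝ) (Y : Fin 2 → Fin 2 → Ω → ℝ)
    (hDm : Measurable D) (hMm : ∀ d, Measurable (M d)) (hYm : ∀ d m, Measurable (Y d m))
    (hDb : ∀ ω, D ω = 0 ∨ D ω = 1)
    (hMb : ∀ d ω, M d ω = 0 ∨ M d ω = 1)
    (hYb : ∀ d m ω, Y d m ω = 0 ∨ Y d m ω = 1)
    (hindep1 : IndepFun D (fun ω => (M 0 ω, M 1 ω)) μ)
    (hindep2 : IndepFun (fun ω => (D ω, M 0 ω, M 1 ω))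
      (fun ω => (Y 0 0 ω, Y 0 1 ω, Y 1 0 ω, Y 1 1 ω)) μ)
    (hmand : ∀ d : Fin 2, ∀ᵐ ω ∂μ, Y d 0 ω = 0)
    (hpos : 0 < (μ {ω | D ω = 1 ∧ D ω * M 1 ω + (1 - D ω) * M 0 ω = 1}).toReal) :
    (∫ ω in {ω | D ω = 1 ∧ D ω * M 1 ω + (1 - D ω) * M 0 ω = 1},
        (((1 - M 1 ω) * Y 1 0 ω + M 1 ω * Y 1 1 ω)
          - ((1 - M 0 ω) * Y 0 0 ω + M 0 ω * Y 0 1 ω)) ∂μ)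
      / (μ {ω | D ω = 1 ∧ D ω * M 1 ω + (1 - D ω) * M 0 ω = 1}).toReal
    = ((μ {ω | M 0 ω = 1 ∧ M 1 ω = 1}).toReal
          * ((∫ ω, Y 1 1 ω ∂μ) - (∫ ω, Y 0 1 ω ∂μ))
        + ((μ {ω | M 0 ω = 1 ∧ M 1 ω = 0}).toReal
            + ((μ {ω | M 0 ω = 0 ∧ M 1 ω = 1}).toReal
              - (μ {ω | M 0 ω = 1 ∧ M 1 ω = 0}).toReal))
          * (((∫ ω, Y 1 1 ω ∂μ) - (∫ ω, Y 0 1 ω ∂μ)) + (∫ ω, Y 0 1 ω ∂μ)))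
      / ((μ {ω | M 0 ω = 1 ∧ M 1 ω = 1}).toReal
        + ((μ {ω | M 0 ω = 1 ∧ M 1 ω = 0}).toReal
            + ((μ {ω | M 0 ω = 0 ∧ M 1 ω = 1}).toReal
              - (μ {ω | M 0 ω = 1 ∧ M 1 ω = 0}).toReal))) :=
  stmt9_general μ D M Y hDm hMm hYm hMb hYb hindep1 hindep2 hmand hpos
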